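/- Decreasing demands preserves competitiveness: consider two instances on the same objects Ω, buyers N, supplies b and valuations v, with demand vectors d and d_new satisfying d j ≤ d_new j for all j ∈ N. If a price vector p is competitive for the instance with demands d_new, then p is competitive for the instance with demands d. -/

import Mathlib

/-!
Shrinking one buyer's demand from `c + 1` to `c` keeps some preferred bundle inside the old one:
if the old bundle has `c + 1` items, drop one unit of least margin `v i - p i`. Any bundle `z`
of size at most `c` misses some unit of the old bundle, and adding that unit to `z` gives a
bundle of size at most `c + 1`, whose margin is at least the dropped one; optimality of the old
bundle then bounds the utility of `z`. Iterating, every buyer can be given a sub-bundle of their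
old bundle that is preferred under the smaller demand, and sub-bundles keep the supply constraints.
-/

open Finset

section MarketDefs

variable {Ω N : Type*}

/-- A bundle for a buyer with demand `dj`: at most `b i` copies of each object,
at most `dj` items in total. -/
def IsBundle [Fintype Ω] (b : Ω → ℕ) (dj : ℕ) (y : Ω → ℕ) : Prop :=
  (∀ i, y i ≤ b i) ∧ ∑ i, y i ≤ dj

/-- Utility of bundle `y` at prices `p` for a buyer with per-unit valuations `v`. -/
noncomputable def utility [Fintype Ω] (v : Ω → ℕ) (p : Ω → ℝ) (y : Ω → ℕ) : ℝ :=
  ∑ i, ((v i : ℝ) - p i) * (y i : ℝ)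

/-- `y` is a preferred bundle (member of the demand set `D_j(p)`). -/
def InDemand [Fintype Ω] (b : Ω → ℕ) (dj : ℕ) (v : Ω → ℕ) (p : Ω → ℝ) (y : Ω → ℕ) : Prop :=
  IsBundle b dj y ∧ ∀ z, IsBundle b dj z → utility v p z ≤ utility v p y

/-- Feasible allocation. -/
def Feasible [Fintype Ω] [Fintype N] (b : Ω → ℕ) (d : N → ℕ) (x : Ω → N → ℕ) : Prop :=
  (∀ i, ∑ j, x i j ≤ b i) ∧ ∀ j, ∑ i, x i j ≤ d j

/-- Stable allocation at prices `p`: feasible, and every buyer gets a preferred bundle. -/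
def Stable [Fintype Ω] [Fintype N] (b : Ω → ℕ) (d : N → ℕ) (v : Ω → N → ℕ)
    (p : Ω → ℝ) (x : Ω → N → ℕ) : Prop :=
  Feasible b d x ∧ ∀ j, InDemand b (d j) (fun i => v i j) p (fun i => x i j)

/-- Competitive price vector: nonnegative, and some allocation is stable for it. -/
def Competitive [Fintype Ω] [Fintype N] (b : Ω → ℕ) (d : N → ℕ) (v : Ω → N → ℕ)
    (p : Ω → ℝ) : Prop :=
  (∀ i, 0 ≤ p i) ∧ ∃ x, Stable b d v p x

/-- Walrasian price vector: some stable allocation sells as much as possible. -/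
def Walrasian [Fintype Ω] [Fintype N] (b : Ω → ℕ) (d : N → ℕ) (v : Ω → N → ℕ)
    (p : Ω → ℝ) : Prop :=
  (∀ i, 0 ≤ p i) ∧ ∃ x, Stable b d v p x ∧
    ∑ i, ∑ j, x i j = min (∑ i, b i) (∑ j, d j)

/-- Componentwise minimum Walrasian price vector. -/
def MinWalrasian [Fintype Ω] [Fintype N] (b : Ω → ℕ) (d : N → ℕ) (v : Ω → N → ℕ)
    (p : Ω → ℝ) : Prop :=
  Walrasian b d v p ∧ ∀ q, Walrasian b d v q → ∀ i, p i ≤ q i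

end MarketDefs

section Demand

variable {Ω : Type*} [Fintype Ω]

theorem utility_add (v : Ω → ℕ) (p : Ω → ℝ) (y z : Ω → ℕ) :
    utility v p (y + z) = utility v p y + utility v p z := by
  simp only [utility, Pi.add_apply, Nat.cast_add, mul_add, sum_add_distrib]

theorem utility_single [DecidableEq Ω] (v : Ω → ℕ) (p : Ω → ℝ) (i : Ω) :
    utility v p (Pi.single i 1) = v i - p i := by
  simp [utility, Pi.single_apply]

theorem sum_add_single [DecidableEq Ω] (y : Ω → ℕ) (i : Ω) :
    ∑ k, (y + Pi.single i 1 : Ω → ℕ) k = ∑ k, y k + 1 := by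
  simp [sum_add_distrib]

theorem IsBundle.add_single [DecidableEq Ω] {b : Ω → ℕ} {c : ℕ} {z : Ω → ℕ}
    (hz : IsBundle b c z) {i : Ω} (hi : z i < b i) :
    IsBundle b (c + 1) (z + Pi.single i 1) := by
  refine ⟨fun k => ?_, by rw [sum_add_single]; exact Nat.add_le_add_right hz.2 1⟩
  rcases eq_or_ne k i with rfl | hk
  · simpa using hi
  · simpa [hk] using hz.1 k

theorem InDemand.of_succ_of_sum_le {b : Ω → ℕ} {c : ℕ} {v : Ω → ℕ} {p : Ω → ℝ} {y : Ω → ℕ}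
    (hy : InDemand b (c + 1) v p y) (hsum : ∑ i, y i ≤ c) : InDemand b c v p y :=
  ⟨⟨hy.1.1, hsum⟩, fun z hz => hy.2 z ⟨hz.1, hz.2.trans c.le_succ⟩⟩

theorem InDemand.exists_le_of_succ {b : Ω → ℕ} {c : ℕ} {v : Ω → ℕ} {p : Ω → ℝ} {y : Ω → ℕ}
    (hy : InDemand b (c + 1) v p y) : ∃ y' ≤ y, InDemand b c v p y' := by
  classical
  by_cases hc : ∑ i, y i ≤ c
  · exact ⟨y, le_rfl, hy.of_succ_of_sum_le hc⟩
  have hsum : ∑ i, y i = c + 1 := le_antisymm hy.1.2 (not_le.mp hc)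
  set margin : Ω → ℝ := fun i => v i - p i
  have hsupp : ({i | 0 < y i} : Finset Ω).Nonempty := by
    obtain ⟨i, -, hi⟩ := exists_lt_of_sum_lt (s := univ) (f := 0) (g := y) (by simp [hsum])
    exact ⟨i, by simpa using hi⟩
  obtain ⟨i₀, hi₀, hmin⟩ := exists_min_image _ margin hsupp
  have hi₀ : 0 < y i₀ := by simpa using hi₀
  set y' := y - Pi.single i₀ 1
  have hdecomp : y = y' + Pi.single i₀ 1 := by
    ext k
    rcases eq_or_ne k i₀ with rfl | hk
    · simp only [Pi.add_apply, Pi.sub_apply, Pi.single_eq_same, y']; omega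
    · simp [y', hk]
  have hsum' : ∑ i, y' i = c := by
    have := sum_add_single y' i₀
    rw [← hdecomp] at this
    omega
  refine ⟨y', tsub_le_self, ⟨fun i => tsub_le_self.trans (hy.1.1 i), hsum'.le⟩, fun z hz => ?_⟩
  -- `z` is smaller than `y`, so it lacks a unit of some object `i` that `y` contains.
  obtain ⟨i, -, hzy⟩ := exists_lt_of_sum_lt (s := univ) (f := z) (g := y) (by have := hz.2; omega)
  have hmargin : margin i₀ ≤ margin i := hmin i (by simpa using (Nat.zero_le _).trans_lt hzy)
  have hopt := hy.2 _ (hz.add_single (hzy.trans_le (hy.1.1 i)))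
  rw [utility_add, utility_single, hdecomp, utility_add, utility_single] at hopt
  simp only [margin] at hmargin
  linarith

theorem InDemand.exists_le_of_le {b : Ω → ℕ} {c D : ℕ} {v : Ω → ℕ} {p : Ω → ℝ} {y : Ω → ℕ}
    (hy : InDemand b D v p y) (hcD : c ≤ D) : ∃ y' ≤ y, InDemand b c v p y' := by
  induction D, hcD using Nat.le_induction generalizing y with
  | base => exact ⟨y, le_rfl, hy⟩
  | succ D _ ih =>
    obtain ⟨y₁, hy₁, hdem₁⟩ := hy.exists_le_of_succ
    obtain ⟨y', hy', hdem'⟩ := ih hdem₁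
    exact ⟨y', hy'.trans hy₁, hdem'⟩

end Demand

/-- decreasing the demands preserves competitiveness of a price vector. -/
theorem competitive_of_demand_decrease
    {Ω N : Type*} [Fintype Ω] [Fintype N]
    (v : Ω → N → ℕ) (b : Ω → ℕ) (d dnew : N → ℕ)
    (hd : ∀ j, d j ≤ dnew j)
    (p : Ω → ℝ) (hcomp : Competitive b dnew v p) :
    Competitive b d v p := by
  obtain ⟨hp, x, ⟨hxb, -⟩, hxdem⟩ := hcomp
  choose y hyx hydem using fun j => (hxdem j).exists_le_of_le (hd j)
  refine ⟨hp, fun i j => y j i, ⟨fun i => ?_, fun j => (hydem j).1.2⟩, hydem⟩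
  exact (sum_le_sum fun j _ => hyx j i).trans (hxb i)
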